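/- arXiv:1604.00655 — 3 statements merged into one kernel-verified Lean document; each statement's English description precedes it below -/
import Mathlib

section
/- (Converse Algebraic Stability) Let M and N be interval decomposable ℝ^n-indexed persistence modules and ε ≥ 0. If there exists an ε-matching between the barcodes B(M) and B(N), then M and N are ε-interleaved. Consequently, d_I(M,N) ≤ d_b(B(M),B(N)). -/
open scoped DirectSum ENNReal

namespace PersStab

/-- A persistence module indexed by a preordered set `P`, with values in
`K`-vector spaces. -/
structure PersMod (K : Type) [Field K] (P : Type) [Preorder P] where
  V : P → Type
  [acg : ∀ a, AddCommGroup (V a)]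
  [mod : ∀ a, Module K (V a)]
  map : ∀ {a b : P}, a ≤ b → (V a →ₗ[K] V b)
  map_id : ∀ a : P, map (le_refl a) = LinearMap.id
  map_comp : ∀ {a b c : P} (h₁ : a ≤ b) (h₂ : b ≤ c),
    map (h₁.trans h₂) = (map h₂).comp (map h₁)

attribute [instance] PersMod.acg PersMod.mod

variable {K : Type} [Field K] {P : Type} [Preorder P]

/-- Pointwise finite dimensional. -/
def PersMod.pfd (M : PersMod K P) : Prop := ∀ a, FiniteDimensional K (M.V a)

/-- A morphism of persistence modules (a natural transformation). -/
structure PersHom (M N : PersMod K P) where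
  app : ∀ a, M.V a →ₗ[K] N.V a
  natural : ∀ {a b : P} (h : a ≤ b), (app b).comp (M.map h) = (N.map h).comp (app a)

/-- An isomorphism of persistence modules. -/
structure PersIso (M N : PersMod K P) where
  e : ∀ a, M.V a ≃ₗ[K] N.V a
  natural : ∀ {a b : P} (h : a ≤ b) (m : M.V a), e b (M.map h m) = N.map h (e a m)

/-- Convexity: the second defining property of an interval in a poset. -/
def IsConvexIn (J : Set P) : Prop :=
  ∀ ⦃a b c : P⦄, a ∈ J → c ∈ J → a ≤ b → b ≤ c → b ∈ J

/-- Connectivity: the third defining property of an interval in a poset: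
any two points are joined by a finite zigzag of comparable points inside `J`. -/
def IsConnectedIn (J : Set P) : Prop :=
  ∀ a ∈ J, ∀ c ∈ J, ∃ (n : ℕ) (f : Fin (n + 1) → P),
    f 0 = a ∧ f (Fin.last n) = c ∧ (∀ k, f k ∈ J) ∧
    ∀ k : Fin n, f k.castSucc ≤ f k.succ ∨ f k.succ ≤ f k.castSucc

/-- An interval in a poset: nonempty, convex and connected. -/
structure IsInterval (J : Set P) : Prop where
  nonempty : J.Nonempty
  convex : IsConvexIn J
  connected : IsConnectedIn J

-- The structure map of an interval module: the identity `K → K` if the source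
-- lies in the interval, and `0` otherwise.
open Classical in
noncomputable def ivMap (K : Type) [Field K] (J : Set P) (a c : P) :
    (PLift (a ∈ J) → K) →ₗ[K] (PLift (c ∈ J) → K) where
  toFun v _ := if h : a ∈ J then v ⟨h⟩ else 0
  map_add' u v := by
    funext hc
    by_cases h : a ∈ J <;> simp [h]
  map_smul' r v := by
    funext hc
    by_cases h : a ∈ J <;> simp [h]

/-- The interval module `I^J` of a convex set `J`: one-dimensional (a copy of `K`)
at points of `J`, zero elsewhere, with identity internal maps inside `J`. -/
noncomputable def intervalModule (K : Type) [Field K] (J : Set P) (hJ : IsConvexIn J) :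
    PersMod K P where
  V a := PLift (a ∈ J) → K
  map {a c} _ := ivMap K J a c
  map_id a := by
    refine LinearMap.ext fun v => funext fun hc => ?_
    obtain ⟨hc⟩ := hc
    simp only [ivMap, LinearMap.coe_mk, AddHom.coe_mk, LinearMap.id_coe, id_eq]
    rw [dif_pos hc]
  map_comp {a b c} h₁ h₂ := by
    refine LinearMap.ext fun v => funext fun hc => ?_
    simp only [ivMap, LinearMap.coe_mk, AddHom.coe_mk, LinearMap.coe_comp,
      Function.comp_apply]
    by_cases ha : a ∈ J
    · have hb : b ∈ J := hJ ha hc.down h₁ h₂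
      simp [ha, hb]
    · simp [ha]

/-- A decomposition of the persistence module `M` as a direct sum of interval
modules `I^{B i}`, `i : ι`, where all the sets `B i` satisfy the predicate `pred`.
The multiset `{B i | i : ι}` is the barcode of `M`. -/
structure DecompOver (pred : Set P → Prop) (M : PersMod K P) where
  ι : Type
  B : ι → Set P
  mem : ∀ i, pred (B i)
  equiv : ∀ a : P, M.V a ≃ₗ[K] (Π₀ i : ι, (PLift (a ∈ B i) → K))
  natural : ∀ {a c : P} (h : a ≤ c) (m : M.V a),
    equiv c (M.map h m) =
      DFinsupp.mapRange.linearMap (fun i => ivMap K (B i) a c) (equiv a m)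

/-- A matching between two multisets, presented as indexed families: a bijection
between a subset (the coimage) of the index set `ι` and a subset (the image) of
the index set `κ`. -/
structure Matching (ι κ : Type) : Type where
  R : ι → κ → Prop
  functional : ∀ {i j j'}, R i j → R i j' → j = j'
  injective : ∀ {i i' j}, R i j → R i' j → i = i'

section Shift

variable (sh : ℝ → P → P)

/-- `M` is `δ`-trivial (with respect to the shift `sh`): all internal maps
from `p` to the `δ`-shift of `p` vanish. -/
def ETrivial (M : PersMod K P) (δ : ℝ) : Prop :=
  ∀ (p : P) (h : p ≤ sh δ p), M.map h = 0

/-- The data `(f, g)` is an `ε`-interleaving between `M` and `N`: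
`f : M → N(ε)` and `g : N → M(ε)` are natural, and the two composites agree with
the `2ε`-shift morphisms of `M` and `N`. -/
structure IsInterleaving (ε : ℝ) (M N : PersMod K P)
    (f : ∀ p, M.V p →ₗ[K] N.V (sh ε p)) (g : ∀ p, N.V p →ₗ[K] M.V (sh ε p)) : Prop where
  nat_f : ∀ {p q : P} (h : p ≤ q) (h' : sh ε p ≤ sh ε q),
    (f q).comp (M.map h) = (N.map h').comp (f p)
  nat_g : ∀ {p q : P} (h : p ≤ q) (h' : sh ε p ≤ sh ε q),
    (g q).comp (N.map h) = (M.map h').comp (g p)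
  gf : ∀ (p : P) (h : p ≤ sh ε (sh ε p)), (g (sh ε p)).comp (f p) = M.map h
  fg : ∀ (p : P) (h : p ≤ sh ε (sh ε p)), (f (sh ε p)).comp (g p) = N.map h

/-- `M` and `N` are `ε`-interleaved. -/
def Interleaved (ε : ℝ) (M N : PersMod K P) : Prop :=
  0 ≤ ε ∧ ∃ f g, IsInterleaving sh ε M N f g

/-- The interleaving distance, valued in `ℝ≥0∞`. -/
noncomputable def dI (M N : PersMod K P) : ℝ≥0∞ :=
  ⨅ ε : {e : ℝ // Interleaved sh e M N}, ENNReal.ofReal ε.1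

/-- `σ` is an `ε`-matching between the barcodes `{A i}` and `{C j}`:
every interval of either barcode which is not `2ε`-trivial is matched, and
matched intervals have `ε`-interleaved interval modules. -/
def IsEpsMatching (K : Type) [Field K] (ε : ℝ) {ι κ : Type}
    (A : ι → Set P) (hA : ∀ i, IsConvexIn (A i))
    (C : κ → Set P) (hC : ∀ j, IsConvexIn (C j)) (σ : Matching ι κ) : Prop :=
  (∀ i, ¬ ETrivial sh (intervalModule K (A i) (hA i)) (2 * ε) → ∃ j, σ.R i j) ∧
  (∀ j, ¬ ETrivial sh (intervalModule K (C j) (hC j)) (2 * ε) → ∃ i, σ.R i j) ∧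
  (∀ i j, σ.R i j →
    Interleaved sh ε (intervalModule K (A i) (hA i)) (intervalModule K (C j) (hC j)))

/-- The bottleneck distance between two barcodes, valued in `ℝ≥0∞`. -/
noncomputable def dB (K : Type) [Field K] {ι κ : Type}
    (A : ι → Set P) (hA : ∀ i, IsConvexIn (A i))
    (C : κ → Set P) (hC : ∀ j, IsConvexIn (C j)) : ℝ≥0∞ :=
  ⨅ e : {e : ℝ // 0 ≤ e ∧ ∃ σ : Matching ι κ, IsEpsMatching sh K e A hA C hC σ},
    ENNReal.ofReal e.1

end Shift

end PersStab
namespace PersStab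

/-! ### `ℝⁿ`-indexed persistence modules -/

/-- The `ε`-shift on `ℝⁿ`: `a ↦ a + (ε, …, ε)`. -/
def shfV (n : ℕ) (ε : ℝ) (v : Fin n → ℝ) : Fin n → ℝ := fun k => v k + ε

end PersStab
namespace PersStab

/-!
Both modules are isomorphic to direct sums of interval modules, and interleavings transport
along isomorphisms, so it suffices to interleave the direct sums. Take for `f` and `g` the
direct sums of the interleavings of matched bars, killing unmatched bars. On a matched bar
`g ∘ f` is the `2ε`-shift by the pairwise interleaving; an unmatched bar is `2ε`-trivial,
so there the `2ε`-shift is zero as well.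
-/

variable {K : Type} [Field K] {P : Type} [Preorder P]

namespace Matching

variable {ι κ : Type}

def symm (σ : Matching ι κ) : Matching κ ι where
  R j i := σ.R i j
  functional := σ.injective
  injective := σ.functional

section DFinsuppMap

open Classical

variable {α : ι → Type} {β : κ → Type} {γ : ι → Type} {δ : κ → Type}
  [∀ i, AddCommGroup (α i)] [∀ i, Module K (α i)]
  [∀ j, AddCommGroup (β j)] [∀ j, Module K (β j)]
  [∀ i, AddCommGroup (γ i)] [∀ i, Module K (γ i)]
  [∀ j, AddCommGroup (δ j)] [∀ j, Module K (δ j)]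

noncomputable def dfinsuppMap (σ : Matching ι κ) (φ : ∀ i j, σ.R i j → (α i →ₗ[K] β j)) :
    (Π₀ i, α i) →ₗ[K] (Π₀ j, β j) :=
  DFinsupp.lsum ℕ fun i =>
    if h : ∃ j, σ.R i j then (DFinsupp.lsingle h.choose).comp (φ i h.choose h.choose_spec)
    else 0

variable (σ : Matching ι κ) (φ : ∀ i j, σ.R i j → (α i →ₗ[K] β j))

theorem dfinsuppMap_single_of_R {i : ι} {j : κ} (hr : σ.R i j) (x : α i) :
    σ.dfinsuppMap φ (DFinsupp.single i x) = DFinsupp.single j (φ i j hr x) := by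
  have h : ∃ j, σ.R i j := ⟨j, hr⟩
  obtain rfl : h.choose = j := σ.functional h.choose_spec hr
  rw [dfinsuppMap, DFinsupp.lsum_single, dif_pos h]
  rfl

theorem dfinsuppMap_single_of_not_exists {i : ι} (h : ¬ ∃ j, σ.R i j) (x : α i) :
    σ.dfinsuppMap φ (DFinsupp.single i x) = 0 := by
  rw [dfinsuppMap, DFinsupp.lsum_single, dif_neg h]
  rfl

theorem dfinsuppMap_comp_mapRange (g : ∀ i, γ i →ₗ[K] α i) :
    (σ.dfinsuppMap φ).comp (DFinsupp.mapRange.linearMap g) =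
      σ.dfinsuppMap fun i j hr => (φ i j hr).comp (g i) := by
  refine DFinsupp.lhom_ext' fun i => LinearMap.ext fun x => ?_
  simp only [LinearMap.comp_apply, DFinsupp.lsingle_apply,
    DFinsupp.mapRange.linearMap_apply, DFinsupp.mapRange_single]
  by_cases h : ∃ j, σ.R i j
  · obtain ⟨j, hr⟩ := h
    simp only [dfinsuppMap_single_of_R σ _ hr, LinearMap.comp_apply]
  · simp only [dfinsuppMap_single_of_not_exists σ _ h]

theorem mapRange_comp_dfinsuppMap (g : ∀ j, β j →ₗ[K] δ j) :
    (DFinsupp.mapRange.linearMap g).comp (σ.dfinsuppMap φ) =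
      σ.dfinsuppMap fun i j hr => (g j).comp (φ i j hr) := by
  refine DFinsupp.lhom_ext' fun i => LinearMap.ext fun x => ?_
  simp only [LinearMap.comp_apply, DFinsupp.lsingle_apply]
  by_cases h : ∃ j, σ.R i j
  · obtain ⟨j, hr⟩ := h
    simp only [dfinsuppMap_single_of_R σ _ hr, DFinsupp.mapRange.linearMap_apply,
      DFinsupp.mapRange_single, LinearMap.comp_apply]
  · simp only [dfinsuppMap_single_of_not_exists σ _ h, map_zero]

theorem symm_dfinsuppMap_comp_dfinsuppMap (ψ : ∀ j i, σ.R i j → (β j →ₗ[K] γ i))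
    (θ : ∀ i, α i →ₗ[K] γ i) (hcomp : ∀ i j hr, (ψ j i hr).comp (φ i j hr) = θ i)
    (hunmatched : ∀ i, (¬ ∃ j, σ.R i j) → θ i = 0) :
    (σ.symm.dfinsuppMap ψ).comp (σ.dfinsuppMap φ) = DFinsupp.mapRange.linearMap θ := by
  refine DFinsupp.lhom_ext' fun i => LinearMap.ext fun x => ?_
  simp only [LinearMap.comp_apply, DFinsupp.lsingle_apply,
    DFinsupp.mapRange.linearMap_apply, DFinsupp.mapRange_single]
  by_cases h : ∃ j, σ.R i j
  · obtain ⟨j, hr⟩ := h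
    rw [dfinsuppMap_single_of_R σ _ hr, ← hcomp i j hr]
    exact dfinsuppMap_single_of_R σ.symm ψ (i := j) hr _
  · rw [dfinsuppMap_single_of_not_exists σ _ h, map_zero, hunmatched i h]
    simp

end DFinsuppMap

end Matching

noncomputable def PersMod.dsum {ι : Type} (M : ι → PersMod K P) : PersMod K P where
  V a := Π₀ i, (M i).V a
  map h := DFinsupp.mapRange.linearMap fun i => (M i).map h
  map_id a := by
    simp only [PersMod.map_id]
    exact DFinsupp.mapRange.linearMap_id
  map_comp h₁ h₂ := by
    rw [← DFinsupp.mapRange.linearMap_comp]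
    exact congrArg _ (funext fun i => (M i).map_comp h₁ h₂)

def DecompOver.persIso {pred : Set P → Prop} {M : PersMod K P} (D : DecompOver pred M)
    (hB : ∀ i, IsConvexIn (D.B i)) :
    PersIso M (PersMod.dsum fun i => intervalModule K (D.B i) (hB i)) where
  e := D.equiv
  natural := D.natural

namespace PersIso

variable {M M' N N' : PersMod K P}

def symm (e : PersIso M N) : PersIso N M where
  e a := (e.e a).symm
  natural h n := by
    apply (e.e _).injective
    rw [LinearEquiv.apply_symm_apply, e.natural, LinearEquiv.apply_symm_apply]

variable {s : P → P} (eM : PersIso M M') (eN : PersIso N N')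

def conj (f : ∀ p, M.V p →ₗ[K] N.V (s p)) (p : P) : M'.V p →ₗ[K] N'.V (s p) :=
  (eN.e (s p)).toLinearMap ∘ₗ f p ∘ₗ (eM.e p).symm.toLinearMap

theorem conj_natural {f : ∀ p, M.V p →ₗ[K] N.V (s p)} {p q : P} (h : p ≤ q) (h' : s p ≤ s q)
    (hf : (f q).comp (M.map h) = (N.map h').comp (f p)) :
    (conj eM eN f q).comp (M'.map h) = (N'.map h').comp (conj eM eN f p) := by
  refine LinearMap.ext fun m => ?_
  have hsymm := eM.symm.natural h m
  have hfm := LinearMap.congr_fun hf (eM.symm.e p m)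
  simp only [conj, symm, LinearMap.comp_apply, LinearEquiv.coe_coe] at hsymm hfm ⊢
  rw [hsymm, hfm, eN.natural]

theorem conj_comp_conj {f : ∀ p, M.V p →ₗ[K] N.V (s p)} {g : ∀ p, N.V p →ₗ[K] M.V (s p)}
    {p : P} (h : p ≤ s (s p)) (hgf : (g (s p)).comp (f p) = M.map h) :
    (conj eN eM g (s p)).comp (conj eM eN f p) = M'.map h := by
  refine LinearMap.ext fun m => ?_
  have hgfm := LinearMap.congr_fun hgf ((eM.e p).symm m)
  simp only [conj, LinearMap.comp_apply, LinearEquiv.coe_coe,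
    LinearEquiv.symm_apply_apply] at hgfm ⊢
  rw [hgfm, eM.natural, LinearEquiv.apply_symm_apply]

end PersIso

section Shift

variable (sh : ℝ → P → P)

theorem ETrivial.map_eq_zero {M : PersMod K P} {δ : ℝ} (hM : ETrivial sh M δ) {p q : P}
    (hq : q = sh δ p) (h : p ≤ q) : M.map h = 0 := by
  subst hq
  exact hM p h

variable {sh}

theorem Interleaved.of_persIso {ε : ℝ} {M M' N N' : PersMod K P} (eM : PersIso M M')
    (eN : PersIso N N') (hMN : Interleaved sh ε M N) : Interleaved sh ε M' N' := by
  obtain ⟨hε, f, g, hfg⟩ := hMN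
  exact ⟨hε, eM.conj eN f, eN.conj eM g,
    ⟨fun h h' => eM.conj_natural eN h h' (hfg.nat_f h h'),
     fun h h' => eN.conj_natural eM h h' (hfg.nat_g h h'),
     fun p h => eM.conj_comp_conj eN h (hfg.gf p h),
     fun p h => eN.conj_comp_conj eM h (hfg.fg p h)⟩⟩

section DSum

variable {ι κ : Type} {M : ι → PersMod K P} {N : κ → PersMod K P} (σ : Matching ι κ)

theorem Matching.dfinsuppMap_natural {s : P → P}
    {f : ∀ i j, σ.R i j → ∀ p, (M i).V p →ₗ[K] (N j).V (s p)} {p q : P} (h : p ≤ q)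
    (h' : s p ≤ s q) (hf : ∀ i j hr, (f i j hr q).comp ((M i).map h) =
      ((N j).map h').comp (f i j hr p)) :
    (σ.dfinsuppMap fun i j hr => f i j hr q).comp ((PersMod.dsum M).map h) =
      ((PersMod.dsum N).map h').comp (σ.dfinsuppMap fun i j hr => f i j hr p) :=
  calc _ = σ.dfinsuppMap fun i j hr => (f i j hr q).comp ((M i).map h) :=
        σ.dfinsuppMap_comp_mapRange _ _
    _ = σ.dfinsuppMap fun i j hr => ((N j).map h').comp (f i j hr p) := by simp only [hf]
    _ = _ := (σ.mapRange_comp_dfinsuppMap _ _).symm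

theorem isInterleaving_dsum {ε : ℝ}
    (f : ∀ i j, σ.R i j → ∀ p, (M i).V p →ₗ[K] (N j).V (sh ε p))
    (g : ∀ i j, σ.R i j → ∀ p, (N j).V p →ₗ[K] (M i).V (sh ε p))
    (hfg : ∀ i j hr, IsInterleaving sh ε (M i) (N j) (f i j hr) (g i j hr))
    (hM : ∀ i, (¬ ∃ j, σ.R i j) → ∀ p (h : p ≤ sh ε (sh ε p)), (M i).map h = 0)
    (hN : ∀ j, (¬ ∃ i, σ.R i j) → ∀ p (h : p ≤ sh ε (sh ε p)), (N j).map h = 0) :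
    IsInterleaving sh ε (PersMod.dsum M) (PersMod.dsum N)
      (fun p => σ.dfinsuppMap fun i j hr => f i j hr p)
      (fun p => σ.symm.dfinsuppMap fun j i hr => g i j hr p) where
  nat_f h h' := σ.dfinsuppMap_natural h h' fun i j hr => (hfg i j hr).nat_f h h'
  nat_g h h' := σ.symm.dfinsuppMap_natural h h' fun j i hr => (hfg i j hr).nat_g h h'
  gf p h := σ.symm_dfinsuppMap_comp_dfinsuppMap _ _ _ (fun i j hr => (hfg i j hr).gf p h)
    fun i hi => hM i hi p h
  fg p h := σ.symm.symm_dfinsuppMap_comp_dfinsuppMap _ _ _ (fun j i hr => (hfg i j hr).fg p h)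
    fun j hj => hN j hj p h

theorem interleaved_dsum_of_isEpsMatching {ε : ℝ} (hε : 0 ≤ ε)
    (hsh : ∀ p, sh ε (sh ε p) = sh (2 * ε) p) {A : ι → Set P} {hA : ∀ i, IsConvexIn (A i)}
    {C : κ → Set P} {hC : ∀ j, IsConvexIn (C j)} (hσ : IsEpsMatching sh K ε A hA C hC σ) :
    Interleaved sh ε (PersMod.dsum fun i => intervalModule K (A i) (hA i))
      (PersMod.dsum fun j => intervalModule K (C j) (hC j)) := by
  obtain ⟨hA_matched, hC_matched, hinterleaved⟩ := hσ
  choose f g hfg using fun i j hr => (hinterleaved i j hr).2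
  refine ⟨hε, _, _, isInterleaving_dsum σ f g hfg ?_ ?_⟩
  · exact fun i hi p => (of_not_not (mt (hA_matched i) hi)).map_eq_zero sh (hsh p)
  · exact fun j hj p => (of_not_not (mt (hC_matched j) hj)).map_eq_zero sh (hsh p)

end DSum

theorem dI_le_dB {ι κ : Type} {M N : PersMod K P} {A : ι → Set P} {hA : ∀ i, IsConvexIn (A i)}
    {C : κ → Set P} {hC : ∀ j, IsConvexIn (C j)}
    (h : ∀ e σ, 0 ≤ e → IsEpsMatching sh K e A hA C hC σ → Interleaved sh e M N) :
    dI sh M N ≤ dB sh K A hA C hC :=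
  le_iInf fun ⟨e, he, σ, hσ⟩ => iInf_le_of_le ⟨e, h e σ he hσ⟩ le_rfl

end Shift

theorem shfV_shfV (n : ℕ) (ε : ℝ) (p : Fin n → ℝ) :
    shfV n ε (shfV n ε p) = shfV n (2 * ε) p := by
  funext k
  simp only [shfV]
  ring

/-- **Converse Algebraic Stability.**
If `M` and `N` are interval decomposable `ℝⁿ`-indexed persistence modules and
there exists an `ε`-matching between their barcodes, then `M` and `N` are
`ε`-interleaved.  Consequently `d_I(M,N) ≤ d_b(B(M),B(N))`. -/
theorem converse_algebraic_stability
    (K : Type) [Field K] (n : ℕ) (ε : ℝ) (hε : 0 ≤ ε)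
    (M N : PersMod K (Fin n → ℝ))
    (DM : DecompOver IsInterval M) (DN : DecompOver IsInterval N)
    (σ : Matching DM.ι DN.ι)
    (hσ : IsEpsMatching (shfV n) K ε DM.B (fun i => (DM.mem i).convex)
      DN.B (fun j => (DN.mem j).convex) σ) :
    Interleaved (shfV n) ε M N ∧
    dI (shfV n) M N ≤
      dB (shfV n) K DM.B (fun i => (DM.mem i).convex)
        DN.B (fun j => (DN.mem j).convex) := by
  have interleaved_of_matching : ∀ e τ, 0 ≤ e →
      IsEpsMatching (shfV n) K e DM.B (fun i => (DM.mem i).convex)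
        DN.B (fun j => (DN.mem j).convex) τ → Interleaved (shfV n) e M N :=
    fun e τ he hτ => (interleaved_dsum_of_isEpsMatching τ he (shfV_shfV n e) hτ).of_persIso
      (DM.persIso _).symm (DN.persIso _).symm
  exact ⟨interleaved_of_matching ε σ hε hσ, dI_le_dB interleaved_of_matching⟩

end PersStab
end

section
/- Let f : M → N be a morphism of ℝ²-indexed persistence modules, ε ≥ 0, and let f₁ : im f ↪ L^ε(f) and f₂ : L^ε(f) ↪ N be the canonical inclusions. Then: (i) the cokernel of f₁ is ε·e₁-trivial; (ii) if the cokernel of f is ε-trivial, then the cokernel of f₂ is ε·e₂-trivial. -/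
open scoped DirectSum ENNReal

namespace PersStab

/-! ### `ℝ²`-indexed persistence modules (product order on `ℝ × ℝ`) -/

variable {K : Type} [Field K]

/-- The diagonal `ε`-shift on `ℝ²`. -/
def shf2 (ε : ℝ) (p : ℝ × ℝ) : ℝ × ℝ := p + (ε, ε)

/-- The standard basis vectors of `ℝ²`. -/
def e1 : ℝ × ℝ := (1, 0)
def e2 : ℝ × ℝ := (0, 1)

lemma le_add_e1 {ε : ℝ} (hε : 0 ≤ ε) (a : ℝ × ℝ) : a ≤ a + ε • e1 := by
  refine Prod.le_def.2 ⟨?_, ?_⟩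
  · simp only [Prod.fst_add, Prod.smul_fst, e1, smul_eq_mul, mul_one]
    linarith
  · simp [e1]

lemma add_e1_mono {ε : ℝ} {a b : ℝ × ℝ} (h : a ≤ b) : a + ε • e1 ≤ b + ε • e1 :=
  add_le_add h le_rfl

/-- A free `ℝ²`-indexed module is a direct sum of interval modules on
principal up-sets `⟨v⟩ = {w : v ≤ w}`. -/
def IsFree {P : Type} [Preorder P] (M : PersMod K P) : Prop :=
  Nonempty (DecompOver (fun J => ∃ v, J = Set.Ici v) M)

lemma Ici_convex {P : Type} [Preorder P] (v : P) : IsConvexIn (Set.Ici v) :=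
  fun _ _ _ ha _ hab _ => le_trans ha hab

/-- The underlying submodule of the interpolant `L^ε(f)` at index `a`:
`{n ∈ N_a : φ_N(a, a + ε·e₁)(n) ∈ im f}`. -/
noncomputable def interpolantSub {M N : PersMod K (ℝ × ℝ)} {ε : ℝ} (hε : 0 ≤ ε)
    (f : PersHom M N) (a : ℝ × ℝ) : Submodule K (N.V a) :=
  Submodule.comap (N.map (le_add_e1 hε a)) (LinearMap.range (f.app (a + ε • e1)))

/-- The defining membership condition of the interpolant `L^ε(f)` is preserved
by the internal maps of `N`. -/
lemma interpolant_mem {M N : PersMod K (ℝ × ℝ)} {ε : ℝ} (hε : 0 ≤ ε) (f : PersHom M N)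
    {a b : ℝ × ℝ} (h : a ≤ b) :
    ∀ x ∈ interpolantSub hε f a, N.map h x ∈ interpolantSub hε f b := by
  simp only [interpolantSub, Submodule.mem_comap]
  intro x hx
  obtain ⟨m, hm⟩ := hx
  have h' : a + ε • e1 ≤ b + ε • e1 := add_e1_mono h
  refine ⟨M.map h' m, ?_⟩
  have hnat := LinearMap.congr_fun (f.natural h') m
  simp only [LinearMap.coe_comp, Function.comp_apply] at hnat
  rw [hnat, hm]
  rw [← LinearMap.comp_apply, ← N.map_comp (le_add_e1 hε a) h',
    ← LinearMap.comp_apply (N.map (le_add_e1 hε b)), ← N.map_comp h (le_add_e1 hε b)]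

/-- The interpolant `L^ε(f)` of a morphism `f : M → N` of `ℝ²`-indexed modules:
the submodule of `N` given by
`L^ε(f)_a = {n ∈ N_a : φ_N(a, a + ε·e₁)(n) ∈ im f}`. -/
noncomputable def interpolant {M N : PersMod K (ℝ × ℝ)} {ε : ℝ} (hε : 0 ≤ ε)
    (f : PersHom M N) : PersMod K (ℝ × ℝ) where
  V a := interpolantSub hε f a
  map {a b} h := LinearMap.restrict (N.map h) (interpolant_mem hε f h)
  map_id a := by
    refine LinearMap.ext fun m => Subtype.ext ?_
    simp only [LinearMap.restrict_apply, LinearMap.id_coe, id_eq]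
    rw [N.map_id]
    rfl
  map_comp {a b c} h₁ h₂ := by
    refine LinearMap.ext fun m => Subtype.ext ?_
    simp only [LinearMap.restrict_apply, LinearMap.coe_comp, Function.comp_apply]
    rw [N.map_comp h₁ h₂]
    rfl

end PersStab

/-! Part (i) is the definition of `L^ε(f)`. For part (ii), `a + ε·e₂ + ε·e₁ = a + (ε, ε)`, so
`ε`-triviality of `coker f` sends `N_a` into `im f` at `a + ε·e₂ + ε·e₁`; by definition of the
interpolant this says that `N_a` is sent into `L^ε(f)` at `a + ε·e₂`. -/

namespace PersStab

variable {K : Type} [Field K]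

lemma add_smul_e2_add_smul_e1 (ε : ℝ) (a : ℝ × ℝ) : a + ε • e2 + ε • e1 = shf2 ε a := by
  simp [e1, e2, shf2, Prod.ext_iff]

lemma PersHom.map_mem_range_of_eq {P : Type} [Preorder P] {M N : PersMod K P}
    (f : PersHom M N) {a b c : P} (e : b = c) (hb : a ≤ b) (hc : a ≤ c) {n : N.V a}
    (hn : N.map hc n ∈ LinearMap.range (f.app c)) :
    N.map hb n ∈ LinearMap.range (f.app b) := by
  subst e
  exact hn

lemma map_mem_interpolantSub {M N : PersMod K (ℝ × ℝ)} {ε : ℝ} (hε : 0 ≤ ε)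
    (f : PersHom M N) {a b : ℝ × ℝ} (hab : a ≤ b) {n : N.V a}
    (hn : N.map (hab.trans (le_add_e1 hε b)) n ∈ LinearMap.range (f.app (b + ε • e1))) :
    N.map hab n ∈ interpolantSub hε f b := by
  rwa [interpolantSub, Submodule.mem_comap, ← LinearMap.comp_apply, ← N.map_comp]

/-- The cokernel of the inclusion of a submodule-functor `W ⊆ N` is `u`-trivial
precisely when, for every index `a` and every `n ∈ N_a`, the element
`φ_N(a, a+u)(n)` lies in `W_{a+u}`; both statements below are phrased this way. -/
theorem interpolant_factorization_triviality
    (K : Type) [Field K] (ε : ℝ) (hε : 0 ≤ ε)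
    (M N : PersMod K (ℝ × ℝ)) (f : PersHom M N) :
    -- (i) the cokernel of `im f ↪ L^ε(f)` is `ε·e₁`-trivial
    (∀ (a : ℝ × ℝ) (x : N.V a), x ∈ interpolantSub hε f a →
      N.map (le_add_e1 hε a) x ∈ LinearMap.range (f.app (a + ε • e1))) ∧
    -- (ii) if coker f is ε-trivial then the cokernel of `L^ε(f) ↪ N` is `ε·e₂`-trivial
    ((∀ (a : ℝ × ℝ) (h : a ≤ shf2 ε a) (n : N.V a),
        ∃ m : M.V (shf2 ε a), f.app (shf2 ε a) m = N.map h n) →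
      ∀ (a : ℝ × ℝ) (h : a ≤ a + ε • e2) (n : N.V a),
        N.map h n ∈ interpolantSub hε f (a + ε • e2)) := by
  refine ⟨fun _ _ hx => hx, fun hcoker a h n => ?_⟩
  have key := add_smul_e2_add_smul_e1 ε a
  have hshift : a ≤ shf2 ε a := key ▸ h.trans (le_add_e1 hε _)
  exact map_mem_interpolantSub hε f h (f.map_mem_range_of_eq key _ hshift (hcoker a hshift n))

end PersStab
end

section
/- (Induced Matching Theorem for Free 2-D Modules) Let f : M → N be a monomorphism of pointwise finite dimensional free ℝ²-indexed persistence modules with ε-trivial cokernel. Then there exists a bijective matching χ : B(M) ↛ B(N) such that for each ⟨b⟩ ∈ B(M), χ(⟨b⟩) = ⟨b′⟩ where b_i − ε ≤ b′_i ≤ b_i for i ∈ {1,2}. -/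
open scoped DirectSum ENNReal

namespace PersStab

variable {K : Type} [Field K] {P : Type} [Preorder P]

section
variable (sh : ℝ → P → P)

/-- The kernel of a morphism `f : M → N(ε)` is `δ`-trivial. -/
def KerTrivialSh (ε δ : ℝ) (M N : PersMod K P)
    (f : ∀ p, M.V p →ₗ[K] N.V (sh ε p)) : Prop :=
  ∀ (p : P) (h : p ≤ sh δ p) (m : M.V p), f p m = 0 → M.map h m = 0

/-- The cokernel of a morphism `f : M → N(ε)` is `δ`-trivial. -/
def CokerTrivialSh (ε δ : ℝ) (M N : PersMod K P)
    (f : ∀ p, M.V p →ₗ[K] N.V (sh ε p)) : Prop :=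
  ∀ (p : P) (h' : sh ε p ≤ sh ε (sh δ p)) (n : N.V (sh ε p)),
    ∃ m : M.V (sh δ p), f (sh δ p) m = N.map h' n

/-- The kernel of a plain morphism `f : M → N` is `δ`-trivial. -/
def KerTrivial (δ : ℝ) {M N : PersMod K P} (f : PersHom M N) : Prop :=
  ∀ (p : P) (h : p ≤ sh δ p) (m : M.V p), f.app p m = 0 → M.map h m = 0

/-- The cokernel of a plain morphism `f : M → N` is `δ`-trivial. -/
def CokerTrivial (δ : ℝ) {M N : PersMod K P} (f : PersHom M N) : Prop :=
  ∀ (p : P) (h : p ≤ sh δ p) (n : N.V p),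
    ∃ m : M.V (sh δ p), f.app (sh δ p) m = N.map h n

end

end PersStab
/-! Let `g : N → M(ε)` be the `ε`-shifted inverse of `f` (it exists because `f` is injective
with `ε`-trivial cokernel) and `C`, `D` the matrices of `f`, `g` on generators. As `g ∘ f` and
`f ∘ g` are shift maps, `C D = 1` and `D C = 1`; moreover `C ⟨v⟩ ⟨w⟩ ≠ 0` forces `w ≤ v` and
`D ⟨w⟩ ⟨v⟩ ≠ 0` forces `v ≤ w + (ε, ε)`. For a finite set `S` of generators of `M`, ordering
by coordinate sum shows that the columns of `D` indexed by `S`, restricted to the generators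
`ε`-close to `S`, are linearly independent. This is Hall's condition for the relation
`w ≤ v ≤ w + (ε, ε)`, whose neighbourhoods are finite by pointwise finite dimensionality; so
Hall's theorem gives injections `B(M) → B(N)` and `B(N) → B(M)` inside the relation, and
Schröder–Bernstein glues them into a bijection. -/

namespace PersStab

open Function Set

variable {K : Type} [Field K]

namespace DecompOver

variable {P : Type} [Preorder P] {X : PersMod K P}
  (D : DecompOver (fun J => ∃ v : P, J = Ici v) X)

noncomputable def gen (i : D.ι) : P := (D.mem i).choose

lemma mem_B_iff {i : D.ι} {a : P} : a ∈ D.B i ↔ D.gen i ≤ a := by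
  conv_lhs => rw [(D.mem i).choose_spec]
  rfl

lemma gen_mem_B (i : D.ι) : D.gen i ∈ D.B i := D.mem_B_iff.2 le_rfl

lemma gen_eq {P : Type} [PartialOrder P] {X : PersMod K P}
    (D : DecompOver (fun J => ∃ v : P, J = Ici v) X) {i : D.ι} {v : P} (h : D.B i = Ici v) :
    D.gen i = v :=
  Ici_injective ((D.mem i).choose_spec.symm.trans h)

open Classical in
noncomputable def coord (a : P) (i : D.ι) : X.V a →ₗ[K] K :=
  if h : a ∈ D.B i then
    (LinearMap.proj (⟨h⟩ : PLift (a ∈ D.B i))).comp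
      ((DFinsupp.lapply i).comp (D.equiv a).toLinearMap)
  else 0

open Classical in
noncomputable def basisVec (a : P) (i : D.ι) : X.V a :=
  (D.equiv a).symm (DFinsupp.single i fun _ => 1)

lemma coord_apply {a : P} {i : D.ι} (h : a ∈ D.B i) (m : X.V a) :
    D.coord a i m = D.equiv a m i ⟨h⟩ := by
  rw [coord, dif_pos h]
  rfl

lemma coord_of_notMem {a : P} {i : D.ι} (h : a ∉ D.B i) (m : X.V a) : D.coord a i m = 0 := by
  rw [coord, dif_neg h]
  rfl

lemma mem_B_of_coord_ne_zero {a : P} {i : D.ι} {m : X.V a} (h : D.coord a i m ≠ 0) :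
    a ∈ D.B i := by
  by_contra ha
  exact h (D.coord_of_notMem ha m)

lemma coord_map {a c : P} (h : a ≤ c) (m : X.V a) (i : D.ι) :
    D.coord c i (X.map h m) = D.coord a i m := by
  by_cases hc : c ∈ D.B i
  · rw [D.coord_apply hc, D.natural h m, DFinsupp.mapRange.linearMap_apply,
      DFinsupp.mapRange_apply]
    by_cases ha : a ∈ D.B i
    · simp [ivMap, ha, D.coord_apply ha]
    · simp [ivMap, ha, D.coord_of_notMem ha]
  · have ha : a ∉ D.B i := fun ha => hc (D.mem_B_iff.2 ((D.mem_B_iff.1 ha).trans h))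
    rw [D.coord_of_notMem hc, D.coord_of_notMem ha]

open Classical in
lemma coord_basisVec {a : P} {i : D.ι} (h : a ∈ D.B i) (i' : D.ι) :
    D.coord a i' (D.basisVec a i) = if i = i' then 1 else 0 := by
  by_cases hii : i = i'
  · subst hii
    rw [D.coord_apply h, basisVec, LinearEquiv.apply_symm_apply, DFinsupp.single_eq_same,
      if_pos rfl]
  · by_cases h' : a ∈ D.B i'
    · rw [D.coord_apply h', basisVec, LinearEquiv.apply_symm_apply,
        DFinsupp.single_eq_of_ne (Ne.symm hii), if_neg hii]
      rfl
    · rw [D.coord_of_notMem h', if_neg hii]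

lemma map_basisVec {a c : P} (h : a ≤ c) {i : D.ι} (ha : a ∈ D.B i) :
    X.map h (D.basisVec a i) = D.basisVec c i := by
  classical
  apply (D.equiv c).injective
  rw [basisVec, basisVec, D.natural h, LinearEquiv.apply_symm_apply,
    LinearEquiv.apply_symm_apply, DFinsupp.mapRange.linearMap_apply]
  ext i' p
  rw [DFinsupp.mapRange_apply]
  by_cases hii : i = i'
  · subst hii
    simp [ivMap, ha]
  · simp [ivMap, DFinsupp.single_eq_of_ne (Ne.symm hii)]

open Classical in
noncomputable def supp (a : P) (m : X.V a) : Finset D.ι := (D.equiv a m).support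

lemma mem_supp_iff {a : P} {m : X.V a} {i : D.ι} : i ∈ D.supp a m ↔ D.coord a i m ≠ 0 := by
  classical
  rw [supp, DFinsupp.mem_support_iff]
  by_cases ha : a ∈ D.B i
  · rw [D.coord_apply ha, Ne, Ne, funext_iff]
    simp only [PLift.forall, Pi.zero_apply]
    exact ⟨fun h h0 => h fun _ => h0, fun h h0 => h (h0 ha)⟩
  · rw [D.coord_of_notMem ha]
    simp only [ne_eq, not_true_eq_false, iff_false, not_not]
    exact funext fun p => absurd p.down ha

lemma sum_coord_smul_basisVec (a : P) (m : X.V a) :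
    ∑ i ∈ D.supp a m, D.coord a i m • D.basisVec a i = m := by
  classical
  apply (D.equiv a).injective
  rw [map_sum]
  conv_rhs => rw [← DFinsupp.sum_single (f := D.equiv a m)]
  refine Finset.sum_congr rfl fun i hi => ?_
  have ha : a ∈ D.B i := D.mem_B_of_coord_ne_zero (D.mem_supp_iff.1 hi)
  rw [map_smul, basisVec, LinearEquiv.apply_symm_apply, D.coord_apply ha,
    ← DFinsupp.single_smul]
  congr 1
  funext p
  simp

lemma finite_setOf_gen_le (hX : X.pfd) (a : P) : {i | D.gen i ≤ a}.Finite := by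
  have := hX a
  have hli : LinearIndependent K fun i : {i // D.gen i ≤ a} => D.basisVec a i.1 := by
    rw [linearIndependent_iff']
    intro t g hsum i hi
    have hcoord := congrArg (D.coord a i.1) hsum
    rw [map_sum, map_zero, Finset.sum_eq_single i] at hcoord
    · simpa [D.coord_basisVec (D.mem_B_iff.2 i.2)] using hcoord
    · intro i' _ hne
      rw [map_smul, D.coord_basisVec (D.mem_B_iff.2 i'.2),
        if_neg fun h => hne (Subtype.ext h), smul_zero]
    · exact fun h => absurd hi h
  exact Set.finite_coe_iff.1 hli.finite

end DecompOver

section GenMatrix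

variable {P : Type} [Preorder P] {X Y Z : PersMod K P}
  (DX : DecompOver (fun J => ∃ v : P, J = Ici v) X)
  (DY : DecompOver (fun J => ∃ v : P, J = Ici v) Y)
  (DZ : DecompOver (fun J => ∃ v : P, J = Ici v) Z)

/-- Row `i` holds the coordinates of the image of the `i`-th generator, so that composition
corresponds to the product `genMatrix φ * genMatrix ψ` (see `genMatrix_comp`). -/
noncomputable def genMatrix {s : P → P} (φ : ∀ a, X.V a →ₗ[K] Y.V (s a))
    (i : DX.ι) (j : DY.ι) : K :=
  DY.coord (s (DX.gen i)) j (φ (DX.gen i) (DX.basisVec (DX.gen i) i))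

lemma gen_le_of_genMatrix_ne_zero {s : P → P} {φ : ∀ a, X.V a →ₗ[K] Y.V (s a)}
    {i : DX.ι} {j : DY.ι} (h : genMatrix DX DY φ i j ≠ 0) : DY.gen j ≤ s (DX.gen i) :=
  DY.mem_B_iff.1 (DY.mem_B_of_coord_ne_zero h)

lemma genMatrix_comp {s t : P → P} (ht : Monotone t) (φ : ∀ a, X.V a →ₗ[K] Y.V (s a))
    (ψ : ∀ a, Y.V a →ₗ[K] Z.V (t a))
    (hψ : ∀ ⦃a b⦄ (h : a ≤ b), (ψ b).comp (Y.map h) = (Z.map (ht h)).comp (ψ a))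
    (i : DX.ι) (k : DZ.ι) :
    genMatrix DX DZ (fun a => (ψ (s a)).comp (φ a)) i k =
      ∑ᶠ j, genMatrix DX DY φ i j * genMatrix DY DZ ψ j k := by
  set a := s (DX.gen i)
  set m := φ (DX.gen i) (DX.basisVec (DX.gen i) i)
  have hsupp : (fun j => genMatrix DX DY φ i j * genMatrix DY DZ ψ j k).support ⊆
      DY.supp a m := fun j hj => DY.mem_supp_iff.2 (left_ne_zero_of_mul hj)
  rw [finsum_eq_sum_of_support_subset _ hsupp]
  change DZ.coord (t a) k (ψ a m) = _
  conv_lhs => rw [← DY.sum_coord_smul_basisVec a m]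
  rw [map_sum, map_sum]
  refine Finset.sum_congr rfl fun j hj => ?_
  have hja : DY.gen j ≤ a := DY.mem_B_iff.1 (DY.mem_B_of_coord_ne_zero (DY.mem_supp_iff.1 hj))
  have hnat := LinearMap.congr_fun (hψ hja) (DY.basisVec (DY.gen j) j)
  rw [LinearMap.comp_apply, LinearMap.comp_apply] at hnat
  rw [map_smul, map_smul, smul_eq_mul, ← DY.map_basisVec hja (DY.gen_mem_B j), hnat,
    DZ.coord_map]
  rfl

open Classical in
lemma genMatrix_map {s : P → P} (hs : ∀ a, a ≤ s a) (i i' : DX.ι) :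
    genMatrix DX DX (fun a => X.map (hs a)) i i' = if i = i' then 1 else 0 := by
  rw [genMatrix, DX.map_basisVec _ (DX.gen_mem_B i),
    DX.coord_basisVec (DX.mem_B_iff.2 (hs _))]

open Classical in
lemma finsum_genMatrix_mul_genMatrix {s t : P → P} (ht : Monotone t)
    (φ : ∀ a, X.V a →ₗ[K] Y.V (s a)) (ψ : ∀ a, Y.V a →ₗ[K] X.V (t a))
    (hψ : ∀ ⦃a b⦄ (h : a ≤ b), (ψ b).comp (Y.map h) = (X.map (ht h)).comp (ψ a))
    (hts : ∀ a, a ≤ t (s a)) (hcomp : ∀ a, (ψ (s a)).comp (φ a) = X.map (hts a))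
    (i i' : DX.ι) :
    ∑ᶠ j, genMatrix DX DY φ i j * genMatrix DY DX ψ j i' = if i = i' then 1 else 0 := by
  rw [← genMatrix_comp DX DY DX ht φ ψ hψ, ← genMatrix_map DX hts]
  simp_rw [hcomp]

end GenMatrix

section ShiftedInverse

variable {P : Type} [Preorder P] (sh : ℝ → P → P) {ε : ℝ} (hsh : ∀ p, p ≤ sh ε p)
  {M N : PersMod K P} (f : PersHom M N) (hf : ∀ p, Injective (f.app p))
  (hcok : CokerTrivial sh ε f)

noncomputable def PersHom.shiftedInverse (a : P) : N.V a →ₗ[K] M.V (sh ε a) :=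
  (LinearEquiv.ofInjective (f.app (sh ε a)) (hf _)).symm.toLinearMap.comp
    ((N.map (hsh a)).codRestrict _ fun n => hcok a (hsh a) n)

lemma PersHom.app_comp_shiftedInverse (a : P) :
    (f.app (sh ε a)).comp (f.shiftedInverse sh hsh hf hcok a) = N.map (hsh a) := by
  ext n
  change f.app (sh ε a) ((LinearEquiv.ofInjective (f.app (sh ε a)) (hf _)).symm _) = _
  rw [← LinearEquiv.ofInjective_apply (f.app (sh ε a)) (h := hf _),
    LinearEquiv.apply_symm_apply]
  rfl

lemma PersHom.shiftedInverse_comp_app (a : P) :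
    (f.shiftedInverse sh hsh hf hcok a).comp (f.app a) = M.map (hsh a) := by
  ext m
  apply hf (sh ε a)
  rw [← LinearMap.comp_apply (f.app _), ← LinearMap.comp_apply (f.app _),
    ← LinearMap.comp_assoc, f.app_comp_shiftedInverse, f.natural]

lemma PersHom.shiftedInverse_natural (hmono : Monotone (sh ε)) ⦃a b : P⦄ (h : a ≤ b) :
    (f.shiftedInverse sh hsh hf hcok b).comp (N.map h) =
      (M.map (hmono h)).comp (f.shiftedInverse sh hsh hf hcok a) := by
  ext n
  apply hf (sh ε b)
  have hfg c := LinearMap.congr_fun (f.app_comp_shiftedInverse sh hsh hf hcok c)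
  have hnat := LinearMap.congr_fun (f.natural (hmono h)) (f.shiftedInverse sh hsh hf hcok a n)
  simp only [LinearMap.comp_apply] at hfg hnat ⊢
  rw [hnat, hfg, hfg, ← LinearMap.comp_apply, ← LinearMap.comp_apply, ← N.map_comp,
    ← N.map_comp]

end ShiftedInverse

section Hall

variable {I J α : Type} [LinearOrder α] (κ : I → α) (c : I → J → K) (d : J → I → K)
  (t : I → Finset J)

open Classical in
lemma linearIndependent_cols_biUnion_of_finsum_mul_eq_ite
    (hcd : ∀ i i', κ i ≤ κ i' → ∑ᶠ j, c i j * d j i' = if i = i' then 1 else 0)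
    (ht : ∀ i i' j, κ i ≤ κ i' → c i j ≠ 0 → d j i' ≠ 0 → j ∈ t i ∨ j ∈ t i')
    (s : Finset I) : LinearIndependent K fun (i : s) (j : s.biUnion t) => d j i := by
  set T := s.biUnion t
  rw [Fintype.linearIndependent_iff]
  intro g hg
  -- Pairing the row of `c` at a `κ`-minimal `i₀` with `g i ≠ 0` against the vanishing
  -- combination of columns of `d` returns `g i₀`.
  by_contra! hne
  obtain ⟨i₁, hi₁⟩ := hne
  obtain ⟨i₀, hi₀, hmin⟩ := Finset.exists_min_image {i | g i ≠ 0} (fun i => κ i)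
    ⟨i₁, by simpa using hi₁⟩
  have hi₀ : g i₀ ≠ 0 := by simpa using hi₀
  have hrow : ∀ i : s, g i ≠ 0 →
      ∑ j : T, c i₀ j * d j i = if (i₀ : I) = i then 1 else 0 := by
    intro i hi
    have hle : κ i₀ ≤ κ i := hmin i (by simpa using hi)
    have hsupp : (fun j => c i₀ j * d j i).support ⊆ T := fun j hj =>
      (ht _ _ j hle (left_ne_zero_of_mul hj) (right_ne_zero_of_mul hj)).elim
        (Finset.subset_biUnion_of_mem t i₀.2 ·) (Finset.subset_biUnion_of_mem t i.2 ·)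
    rw [Finset.sum_coe_sort T (fun j => c i₀ j * d j i),
      ← finsum_eq_sum_of_support_subset _ hsupp, hcd _ _ hle]
  have hzero : ∑ j : T, c i₀ j * ∑ i : s, g i * d j i = 0 := by
    refine Finset.sum_eq_zero fun j _ => ?_
    have := congrFun hg j
    simp only [Finset.sum_apply, Pi.smul_apply, smul_eq_mul, Pi.zero_apply] at this
    rw [this, mul_zero]
  have hcomp : ∑ j : T, c i₀ j * ∑ i : s, g i * d j i = g i₀ := calc
    _ = ∑ i : s, g i * ∑ j : T, c i₀ j * d j i := by
      simp_rw [Finset.mul_sum]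
      rw [Finset.sum_comm]
      simp_rw [mul_left_comm]
    _ = g i₀ := by
      rw [Finset.sum_eq_single i₀, hrow i₀ hi₀, if_pos rfl, mul_one]
      · intro i _ hi
        by_cases hgi : g i = 0
        · rw [hgi, zero_mul]
        · rw [hrow i hgi, if_neg fun h => hi (Subtype.ext h).symm, mul_zero]
      · simp
  exact hi₀ (hcomp.symm.trans hzero)

open Classical in
lemma card_le_card_biUnion_of_finsum_mul_eq_ite
    (hcd : ∀ i i', κ i ≤ κ i' → ∑ᶠ j, c i j * d j i' = if i = i' then 1 else 0)
    (ht : ∀ i i' j, κ i ≤ κ i' → c i j ≠ 0 → d j i' ≠ 0 → j ∈ t i ∨ j ∈ t i')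
    (s : Finset I) : s.card ≤ (s.biUnion t).card := by
  have hli := linearIndependent_cols_biUnion_of_finsum_mul_eq_ite κ c d t hcd ht s
  simpa using hli.fintype_card_le_finrank

end Hall

lemma le_shf2 {ε : ℝ} (hε : 0 ≤ ε) (p : ℝ × ℝ) : p ≤ shf2 ε p := by
  simp [shf2, Prod.le_def, hε]

lemma monotone_shf2 (ε : ℝ) : Monotone (shf2 ε) := fun _ _ h => add_le_add_left h _

lemma mem_Icc_shf2_iff {ε : ℝ} {w v : ℝ × ℝ} :
    v ∈ Icc w (shf2 ε w) ↔ v.1 - ε ≤ w.1 ∧ w.1 ≤ v.1 ∧ v.2 - ε ≤ w.2 ∧ w.2 ≤ v.2 := by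
  simp only [mem_Icc, shf2, Prod.le_def, Prod.fst_add, Prod.snd_add]
  constructor
  · rintro ⟨⟨h1, h2⟩, h3, h4⟩
    exact ⟨by linarith, h1, by linarith, h2⟩
  · rintro ⟨h1, h2, h3, h4⟩
    exact ⟨⟨h2, h4⟩, by linarith, by linarith⟩

-- The one fact about the plane in the argument: it makes the relevant part of the product of
-- the generator matrices triangular once generators are ordered by coordinate sum.
lemma mem_Icc_or_mem_Icc_of_add_le {ε : ℝ} {w v v' : ℝ × ℝ} (hw : w ≤ v)
    (hv' : v' ≤ shf2 ε w) (hsum : v.1 + v.2 ≤ v'.1 + v'.2) :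
    v ∈ Icc w (shf2 ε w) ∨ v' ∈ Icc w (shf2 ε w) := by
  simp only [mem_Icc, shf2, Prod.le_def, Prod.fst_add, Prod.snd_add] at *
  by_cases hclose : v.1 ≤ w.1 + ε ∧ v.2 ≤ w.2 + ε
  · exact Or.inl ⟨hw, hclose⟩
  · refine Or.inr ⟨?_, hv'⟩
    rw [not_and_or, not_le, not_le] at hclose
    constructor <;> rcases hclose with h | h <;> linarith [hw.1, hw.2, hv'.1, hv'.2]

open Classical in
lemma exists_injective_mem_Icc {I J : Type} {ε : ℝ} (p : I → ℝ × ℝ) (q : J → ℝ × ℝ)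
    (c : I → J → K) (d : J → I → K) (hc : ∀ i j, c i j ≠ 0 → q j ≤ p i)
    (hd : ∀ i j, d j i ≠ 0 → p i ≤ shf2 ε (q j))
    (hcd : ∀ i i', ∑ᶠ j, c i j * d j i' = if i = i' then 1 else 0)
    (hfin : ∀ i, {j | q j ≤ p i}.Finite) :
    ∃ φ : I → J, Injective φ ∧ ∀ i, p i ∈ Icc (q (φ i)) (shf2 ε (q (φ i))) := by
  have hfin' i : {j | p i ∈ Icc (q j) (shf2 ε (q j))}.Finite :=
    (hfin i).subset fun _ hj => hj.1
  obtain ⟨φ, hφ, hmem⟩ :=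
    (Finset.all_card_le_biUnion_card_iff_exists_injective fun i => (hfin' i).toFinset).1
      (card_le_card_biUnion_of_finsum_mul_eq_ite (fun i => (p i).1 + (p i).2) c d _
        (fun i i' _ => hcd i i') fun i i' j hle hcij hdji' => by
          simpa using mem_Icc_or_mem_Icc_of_add_le (hc i j hcij) (hd i' j hdji') hle)
  exact ⟨φ, hφ, fun i => (hfin' i).mem_toFinset.1 (hmem i)⟩

def Matching.ofInjective {ι κ : Type} (e : ι → κ) (he : Injective e) : Matching ι κ where
  R i j := e i = j
  functional h h' := h.symm.trans h'
  injective h h' := he (h.trans h'.symm)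

/-- **Induced Matching Theorem for Free 2-D Modules.**
Let `f : M → N` be a monomorphism of pointwise finite dimensional free
`ℝ²`-indexed persistence modules with `ε`-trivial cokernel.  Then there is a
bijective matching `χ : B(M) ↛ B(N)` such that for each `⟨b⟩ ∈ B(M)`,
`χ(⟨b⟩) = ⟨b'⟩` with `bᵢ - ε ≤ b'ᵢ ≤ bᵢ` for `i ∈ {1,2}`. -/
theorem induced_matching_free_2d
    (K : Type) [Field K] (ε : ℝ) (hε : 0 ≤ ε)
    (M N : PersMod K (ℝ × ℝ)) (hM : M.pfd) (hN : N.pfd)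
    (DM : DecompOver (fun J => ∃ v : ℝ × ℝ, J = Set.Ici v) M)
    (DN : DecompOver (fun J => ∃ v : ℝ × ℝ, J = Set.Ici v) N)
    (f : PersHom M N) (hf : ∀ p, Function.Injective (f.app p))
    (hcok : CokerTrivial shf2 ε f) :
    ∃ σ : Matching DM.ι DN.ι,
      (∀ i, ∃ j, σ.R i j) ∧ (∀ j, ∃ i, σ.R i j) ∧
      (∀ i j, σ.R i j → ∀ v w : ℝ × ℝ, DM.B i = Set.Ici v → DN.B j = Set.Ici w →
        v.1 - ε ≤ w.1 ∧ w.1 ≤ v.1 ∧ v.2 - ε ≤ w.2 ∧ w.2 ≤ v.2) := by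
  set g := f.shiftedInverse shf2 (le_shf2 hε) hf hcok
  have hg := f.shiftedInverse_natural shf2 (le_shf2 hε) hf hcok (monotone_shf2 ε)
  obtain ⟨φ, hφ, hφR⟩ := exists_injective_mem_Icc DM.gen DN.gen
    (genMatrix DM DN f.app) (genMatrix DN DM g)
    (fun _ _ h => gen_le_of_genMatrix_ne_zero DM DN h)
    (fun _ _ h => gen_le_of_genMatrix_ne_zero DN DM h)
    (finsum_genMatrix_mul_genMatrix DM DN (s := id) (monotone_shf2 ε) f.app g hg (le_shf2 hε)
      (f.shiftedInverse_comp_app shf2 (le_shf2 hε) hf hcok))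
    fun _ => DN.finite_setOf_gen_le hN _
  obtain ⟨ψ, hψ, hψR⟩ := exists_injective_mem_Icc (fun j => shf2 ε (DN.gen j)) DM.gen
    (genMatrix DN DM g) (genMatrix DM DN f.app)
    (fun _ _ h => gen_le_of_genMatrix_ne_zero DN DM h)
    (fun _ _ h => monotone_shf2 ε (gen_le_of_genMatrix_ne_zero DM DN h))
    (finsum_genMatrix_mul_genMatrix DN DM (t := id) monotone_id g f.app
      (fun _ _ h => f.natural h) (le_shf2 hε) (f.app_comp_shiftedInverse shf2 (le_shf2 hε) hf hcok))
    fun _ => DM.finite_setOf_gen_le hM _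
  obtain ⟨e, he, heR⟩ := Embedding.schroeder_bernstein_of_rel hφ hψ
    (fun i j => DM.gen i ∈ Icc (DN.gen j) (shf2 ε (DN.gen j))) hφR
    fun j => ⟨le_of_add_le_add_right (hψR j).2, (hψR j).1⟩
  refine ⟨Matching.ofInjective e he.1, fun i => ⟨e i, rfl⟩, he.2, ?_⟩
  rintro i _ rfl v w hv hw
  rw [← mem_Icc_shf2_iff, ← DM.gen_eq hv, ← DN.gen_eq hw]
  exact heR i

end PersStab
end
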